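/- The ratio Nref₄/M₄ is monotonically decreasing in each prime factor: if d is a cube-free positive integer, p is a prime dividing d with k := v_p(d) ∈ {1,2}, and q is a prime with q > p and q ∤ d, then Nref₄(d)/M₄(d) ≥ Nref₄((d/p^k)·q^k)/M₄((d/p^k)·q^k). -/
import Mathlib


open Real Finset

/-- The lower bound `M(d)` for the mass of a strongly square free quaternary lattice of
determinant `d` (Lemma 3.3(b)). -/
noncomputable def M4 (d : ℕ) : ℝ :=
  (1 / 2160) *
    (∏ p ∈ d.primeFactors.filter fun p => p ≠ 2 ∧ d.factorization p = 2,
      ((1 : ℝ) / 2) * (p : ℝ) ^ 2 * (((p : ℝ) - 1) / ((p : ℝ) + 1))) *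
    (∏ p ∈ d.primeFactors.filter fun p => p ≠ 2 ∧ d.factorization p = 1,
      ((1 : ℝ) / 2) * (p : ℝ) ^ ((3 : ℝ) / 2))

/-- The upper bound `Nref(d)` for the reflective part of the mass of a strongly square free
quaternary lattice of determinant `d` (Lemma 3.9(b)); `Ω` is realised by
`Nat.primeFactorsList.length`. -/
noncomputable def Nref4 (d : ℕ) : ℝ :=
  3 * (4 : ℝ) ^ d.primeFactorsList.length / 16 +
    2 * (3 : ℝ) ^ d.primeFactorsList.length / 32 +
    (2 : ℝ) ^ d.primeFactorsList.length / 72 +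
    3 * (2 : ℝ) ^ d.primeFactorsList.length / 96 + 53 / 5760 +
    ∑ x ∈ d.divisors,
      (1 / 4) * (2 * (2 : ℝ) ^ x.primeFactorsList.length / 4 + 5 / 24) *
        (2 * (2 : ℝ) ^ (d / x).primeFactorsList.length / 4 + 5 / 24)

theorem sum_div_cop (f : ℕ → ℝ) {m n : ℕ} (hmn : m.Coprime n) (hm : m ≠ 0) (hn : n ≠ 0) :
    ∑ x ∈ (m * n).divisors, f x = ∑ a ∈ m.divisors, ∑ b ∈ n.divisors, f (a * b) := by
  rw [← Finset.sum_product']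
  refine Finset.sum_nbij' (fun x => (Nat.gcd x m, Nat.gcd x n)) (fun ab => ab.1 * ab.2) ?_ ?_ ?_ ?_ ?_
  · rintro x hx
    simp only [Nat.mem_divisors, Finset.mem_product] at *
    exact ⟨⟨Nat.gcd_dvd_right _ _, hm⟩, ⟨Nat.gcd_dvd_right _ _, hn⟩⟩
  · rintro ⟨a, b⟩ hab
    simp only [Nat.mem_divisors, Finset.mem_product] at *
    exact ⟨mul_dvd_mul hab.1.1 hab.2.1, mul_ne_zero hm hn⟩
  · rintro x hx
    simp only [Nat.mem_divisors] at hx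
    show x.gcd m * x.gcd n = x
    rw [← Nat.Coprime.gcd_mul x hmn, Nat.gcd_eq_left hx.1]
  · rintro ⟨a, b⟩ hab
    simp only [Nat.mem_divisors, Finset.mem_product] at hab
    have hbm : Nat.Coprime b m := ((Nat.Coprime.symm hmn).coprime_dvd_left hab.2.1)
    have han : Nat.Coprime a n := (hmn.coprime_dvd_left hab.1.1)
    have h1 : Nat.gcd (a * b) m = a := by
      rw [Nat.Coprime.gcd_mul_right_cancel a hbm, Nat.gcd_eq_left hab.1.1]
    have h2 : Nat.gcd (a * b) n = b := by
      rw [Nat.Coprime.gcd_mul_left_cancel b han, Nat.gcd_eq_left hab.2.1]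
    simp [h1, h2]
  · rintro x hx
    simp only [Nat.mem_divisors] at hx
    show f x = f (x.gcd m * x.gcd n)
    rw [← Nat.Coprime.gcd_mul x hmn, Nat.gcd_eq_left hx.1]

lemma omega_mul_pow {m p k : ℕ} (hm : m ≠ 0) (hp : p.Prime) :
    (m * p ^ k).primeFactorsList.length = m.primeFactorsList.length + k := by
  have := ArithmeticFunction.cardFactors_mul hm (pow_ne_zero k hp.pos.ne')
  simpa [ArithmeticFunction.cardFactors_apply,
    ArithmeticFunction.cardFactors_apply_prime_pow hp] using this

noncomputable def gf (n : ℕ) : ℝ := 2 * (2 : ℝ) ^ n / 4 + 5 / 24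

noncomputable def Nform (m k : ℕ) : ℝ :=
  3 * (4 : ℝ) ^ (m.primeFactorsList.length + k) / 16 +
    2 * (3 : ℝ) ^ (m.primeFactorsList.length + k) / 32 +
    (2 : ℝ) ^ (m.primeFactorsList.length + k) / 72 +
    3 * (2 : ℝ) ^ (m.primeFactorsList.length + k) / 96 + 53 / 5760 +
    ∑ a ∈ m.divisors, ∑ j ∈ Finset.range (k + 1),
      (1 / 4) * gf (a.primeFactorsList.length + j) *
        gf ((m / a).primeFactorsList.length + (k - j))

lemma Nref4_eq_Nform {m p k : ℕ} (hm : m ≠ 0) (hp : p.Prime) (hpm : ¬ p ∣ m) :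
    Nref4 (m * p ^ k) = Nform m k := by
  have hcop : m.Coprime (p ^ k) :=
    Nat.Coprime.pow_right k (Nat.Coprime.symm ((Nat.Prime.coprime_iff_not_dvd hp).mpr hpm))
  have hΩ := omega_mul_pow (k := k) hm hp
  unfold Nref4 Nform
  rw [hΩ, sum_div_cop _ hcop hm (pow_ne_zero k hp.pos.ne')]
  congr 1
  apply Finset.sum_congr rfl
  intro a ha
  rw [Nat.sum_divisors_prime_pow hp]
  apply Finset.sum_congr rfl
  intro j hj
  simp only [Finset.mem_range, Nat.lt_succ_iff] at hj
  obtain ⟨hadvd, -⟩ := Nat.mem_divisors.mp ha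
  have ha0 : a ≠ 0 := fun h => hm (by simpa [h] using hadvd)
  have hma0 : m / a ≠ 0 := Nat.ne_of_gt (Nat.div_pos (Nat.le_of_dvd (Nat.pos_of_ne_zero hm) hadvd)
    (Nat.pos_of_ne_zero ha0))
  have hdiv : (m * p ^ k) / (a * p ^ j) = (m / a) * p ^ (k - j) := by
    rw [← Nat.pow_div hj hp.pos, Nat.div_mul_div_comm hadvd (pow_dvd_pow p hj)]
  rw [hdiv, omega_mul_pow ha0 hp, omega_mul_pow hma0 hp]
  rfl

noncomputable def cfac (p k : ℕ) : ℝ :=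
  if p = 2 then 1 else
  if k = 1 then (1 / 2) * (p : ℝ) ^ ((3 : ℝ) / 2)
  else (1 / 2) * (p : ℝ) ^ 2 * (((p : ℝ) - 1) / ((p : ℝ) + 1))

lemma M4_mul_prime_pow {m p k : ℕ} (hm : m ≠ 0) (hp : p.Prime) (hpm : ¬ p ∣ m)
    (hk : k = 1 ∨ k = 2) : M4 (m * p ^ k) = M4 m * cfac p k := by
  have hk0 : k ≠ 0 := by rcases hk with rfl | rfl <;> norm_num
  have hpk0 : p ^ k ≠ 0 := pow_ne_zero _ hp.pos.ne'
  have hpf : (m * p ^ k).primeFactors = insert p m.primeFactors := by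
    rw [Nat.primeFactors_mul hm hpk0, Nat.primeFactors_pow _ hk0, Nat.Prime.primeFactors hp]
    rw [Finset.union_comm, Finset.insert_eq]
  have hpnotin : p ∉ m.primeFactors := fun h => hpm (Nat.dvd_of_mem_primeFactors h)
  have hfact : ∀ r, (m * p ^ k).factorization r
      = m.factorization r + if r = p then k else 0 := by
    intro r
    rw [Nat.factorization_mul hm hpk0]
    simp [Nat.Prime.factorization_pow hp, Finsupp.single_apply, eq_comm]
  have hfact_eq : ∀ r ∈ m.primeFactors,
      ∀ e : ℕ, ((r ≠ 2 ∧ (m * p ^ k).factorization r = e) ↔ (r ≠ 2 ∧ m.factorization r = e)) := by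
    intro r hr e
    have hrp : r ≠ p := fun h => hpnotin (h ▸ hr)
    rw [hfact r, if_neg hrp, add_zero]
  have key : ∀ e : ℕ,
      (m * p ^ k).primeFactors.filter (fun r => r ≠ 2 ∧ (m * p ^ k).factorization r = e)
      = (if p ≠ 2 ∧ k = e then insert p else id)
          (m.primeFactors.filter fun r => r ≠ 2 ∧ m.factorization r = e) := by
    intro e
    rw [hpf, Finset.filter_insert]
    have hfp : (m * p ^ k).factorization p = k := by
      rw [hfact p]; simp [Nat.factorization_eq_zero_of_not_dvd hpm]
    have hcong : (m.primeFactors.filter fun r => r ≠ 2 ∧ (m * p ^ k).factorization r = e)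
        = m.primeFactors.filter fun r => r ≠ 2 ∧ m.factorization r = e :=
      Finset.filter_congr (fun r hr => by simpa using hfact_eq r hr e)
    by_cases h2 : p ≠ 2 ∧ k = e
    · rw [if_pos ⟨h2.1, by rw [hfp]; exact h2.2⟩, if_pos h2, hcong]
    · rw [if_neg (fun hc => h2 ⟨hc.1, by rw [hfp] at hc; exact hc.2⟩), if_neg h2, hcong]
      rfl
  have hnot2 : ∀ e : ℕ, p ∉ (m.primeFactors.filter fun r => r ≠ 2 ∧ m.factorization r = e) :=
    fun e h => hpnotin (Finset.mem_of_mem_filter _ h)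
  unfold M4 cfac
  rcases hk with rfl | rfl
  · by_cases hp2 : p = 2
    · subst hp2
      rw [key 1, key 2, if_neg (by simp), if_neg (by simp), if_pos rfl, mul_one]; rfl
    · rw [key 1, key 2, if_pos (⟨hp2, rfl⟩ : p ≠ 2 ∧ 1 = 1),
        if_neg (show ¬(p ≠ 2 ∧ 1 = 2) by simp), if_neg hp2, if_pos rfl]
      simp only [id]
      rw [Finset.prod_insert (hnot2 1)]
      ring
  · by_cases hp2 : p = 2
    · subst hp2
      rw [key 1, key 2, if_neg (by simp), if_neg (by simp), if_pos rfl, mul_one]; rfl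
    · rw [key 1, key 2, if_pos (⟨hp2, rfl⟩ : p ≠ 2 ∧ 2 = 2),
        if_neg (show ¬(p ≠ 2 ∧ 2 = 1) by simp), if_neg hp2, if_neg (by norm_num)]
      simp only [id]
      rw [Finset.prod_insert (hnot2 2)]
      ring

lemma M4_pos (m : ℕ) : 0 < M4 m := by
  unfold M4
  have h2 : (0:ℝ) < ∏ r ∈ m.primeFactors.filter fun r => r ≠ 2 ∧ m.factorization r = 2,
      ((1 : ℝ) / 2) * (r : ℝ) ^ 2 * (((r : ℝ) - 1) / ((r : ℝ) + 1)) := by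
    apply Finset.prod_pos
    intro r hr
    obtain ⟨hr1, hr2, -⟩ := Finset.mem_filter.mp hr
    have hrp := Nat.prime_of_mem_primeFactors hr1
    have h2le := hrp.two_le
    have h3 : (3:ℝ) ≤ r := by exact_mod_cast (by omega : 3 ≤ r)
    apply mul_pos (by nlinarith)
    apply div_pos <;> linarith
  have h1 : (0:ℝ) < ∏ r ∈ m.primeFactors.filter fun r => r ≠ 2 ∧ m.factorization r = 1,
      ((1 : ℝ) / 2) * (r : ℝ) ^ ((3:ℝ) / 2) := by
    apply Finset.prod_pos
    intro r hr
    obtain ⟨hr1, -, -⟩ := Finset.mem_filter.mp hr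
    have hrp := Nat.prime_of_mem_primeFactors hr1
    have h0 : (0:ℝ) < r := by exact_mod_cast hrp.pos
    positivity
  exact mul_pos (mul_pos (by norm_num) h2) h1

lemma Nref4_nonneg (d : ℕ) : 0 ≤ Nref4 d := by
  unfold Nref4
  have : ∀ x ∈ d.divisors, (0:ℝ) ≤ (1 / 4) * (2 * (2 : ℝ) ^ x.primeFactorsList.length / 4 + 5 / 24) *
      (2 * (2 : ℝ) ^ (d / x).primeFactorsList.length / 4 + 5 / 24) := by
    intro x _; positivity
  have hs := Finset.sum_nonneg this
  positivity

lemma cfac_one_le {q : ℕ} (hq : q.Prime) (hq2 : q ≠ 2) (k : ℕ) (hk : k = 1 ∨ k = 2) :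
    1 ≤ cfac q k := by
  have h2le := hq.two_le
  have h3 : (3:ℝ) ≤ q := by exact_mod_cast (by omega : 3 ≤ q)
  unfold cfac
  rw [if_neg hq2]
  rcases hk with rfl | rfl
  · rw [if_pos rfl]
    have h1 : (q:ℝ) ^ (1:ℝ) ≤ (q:ℝ) ^ ((3:ℝ)/2) :=
      Real.rpow_le_rpow_of_exponent_le (by linarith) (by norm_num)
    rw [Real.rpow_one] at h1
    linarith
  · rw [if_neg (by norm_num)]
    have h2 : (0:ℝ) < (q:ℝ) + 1 := by linarith
    have hhalf : (1:ℝ)/2 ≤ ((q:ℝ) - 1) / ((q:ℝ) + 1) := by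
      rw [div_le_div_iff₀ (by norm_num) h2]; linarith
    have hq9 : (9:ℝ) ≤ (q:ℝ)^2 := by nlinarith
    have h9 : (9:ℝ)*(1/2) ≤ (q:ℝ)^2 * (((q:ℝ) - 1) / ((q:ℝ) + 1)) :=
      mul_le_mul hq9 hhalf (by norm_num) (by positivity)
    nlinarith [h9]

lemma cfac_mono {p q : ℕ} (hp : p.Prime) (hq : q.Prime) (hpq : p < q) (k : ℕ)
    (hk : k = 1 ∨ k = 2) : cfac p k ≤ cfac q k := by
  have hq2 : q ≠ 2 := by have := hp.two_le; omega
  by_cases hp2 : p = 2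
  · rw [show cfac p k = 1 by unfold cfac; rw [if_pos hp2]]
    exact cfac_one_le hq hq2 k hk
  · have h2le := hp.two_le
    have h3 : (3:ℝ) ≤ p := by exact_mod_cast (by omega : 3 ≤ p)
    have hpq' : (p:ℝ) + 1 ≤ q := by exact_mod_cast hpq
    unfold cfac
    rw [if_neg hp2, if_neg hq2]
    rcases hk with rfl | rfl
    · rw [if_pos rfl, if_pos rfl]
      have := Real.rpow_le_rpow (by linarith : (0:ℝ) ≤ p) (by linarith : (p:ℝ) ≤ q)
        (by norm_num : (0:ℝ) ≤ 3/2)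
      linarith
    · rw [if_neg (by norm_num), if_neg (by norm_num), ← mul_div_assoc, ← mul_div_assoc,
        div_le_div_iff₀ (by linarith) (by linarith)]
      have hfac : (0:ℝ) ≤ (p:ℝ)*(q:ℝ)*((q:ℝ)+(p:ℝ)) + (q:ℝ)^2 + (p:ℝ)^2 - (q:ℝ) - (p:ℝ) := by
        nlinarith
      nlinarith [mul_nonneg (by linarith : (0:ℝ) ≤ (q:ℝ) - (p:ℝ)) hfac]

/-- Lemma 3.10 in dimension 4: the ratio `Nref/M` is monotonically decreasing in each prime
factor of the determinant (`k = v_p(d) ∈ {1, 2}`). -/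
theorem ratio_Nref_mono_dim4 (d : ℕ) (hd : 0 < d)
    (hcf : ∀ p : ℕ, p.Prime → d.factorization p ≤ 2)
    (p : ℕ) (hp : p.Prime) (hpd : p ∣ d) (k : ℕ) (hk : k = 1 ∨ k = 2)
    (hkp : d.factorization p = k) (q : ℕ) (hq : q.Prime) (hpq : p < q) (hqd : ¬ q ∣ d) :
    Nref4 (d / p ^ k * q ^ k) / M4 (d / p ^ k * q ^ k) ≤ Nref4 d / M4 d := by
  have hpk : p ^ k ∣ d := hkp ▸ Nat.ordProj_dvd d p
  set m := d / p ^ k with hm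
  have hd2 : d = m * p ^ k := (Nat.div_mul_cancel hpk).symm
  have hm0 : m ≠ 0 :=
    Nat.ne_of_gt (Nat.div_pos (Nat.le_of_dvd hd hpk) (pow_pos hp.pos k))
  have hpm : ¬ p ∣ m := by
    have h := Nat.not_dvd_ordCompl hp hd.ne'
    rwa [hkp] at h
  have hqm : ¬ q ∣ m := fun h => hqd (h.trans (Nat.div_dvd_of_dvd hpk))
  have hNeq : Nref4 (m * q ^ k) = Nref4 d := by
    rw [Nref4_eq_Nform hm0 hq hqm, hd2, Nref4_eq_Nform hm0 hp hpm]
  have hMle : M4 d ≤ M4 (m * q ^ k) := by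
    rw [hd2, M4_mul_prime_pow hm0 hp hpm hk, M4_mul_prime_pow hm0 hq hqm hk]
    exact mul_le_mul_of_nonneg_left (cfac_mono hp hq hpq k hk) (M4_pos m).le
  rw [hNeq]
  gcongr
  exacts [Nref4_nonneg d, M4_pos d]
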